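/- arXiv:2307.02959 — 6 statements merged into one kernel-verified Lean document; each statement's English description precedes it below -/
import Mathlib

section
/- For all s, t : Fin n → Fin 4, the Pauli strings satisfy the commutation relation P_s * P_t = (-1)^{s·t} • (P_t * P_s). -/
open Matrix

/-- Single-qubit Pauli matrices: σ₀ = I, σ₁ = X, σ₂ = Y, σ₃ = Z. -/
noncomputable def pauli : Fin 4 → Matrix (Fin 2) (Fin 2) ℂ
  | 0 => 1
  | 1 => !![0, 1; 1, 0]
  | 2 => !![0, -Complex.I; Complex.I, 0]
  | 3 => !![1, 0; 0, -1]

/-- The Pauli string `P_s = ⊗ᵢ σ_{s i}` as a `2^n × 2^n` matrix, with rows and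
columns indexed by bit strings `Fin n → Fin 2` (entrywise Kronecker product). -/
noncomputable def pauliString {n : ℕ} (s : Fin n → Fin 4) :
    Matrix (Fin n → Fin 2) (Fin n → Fin 2) ℂ :=
  Matrix.of fun x y => ∏ i, pauli (s i) (x i) (y i)

/-- The commutation exponent `s·t ∈ ZMod 2`: parity of the number of indices where
`s` and `t` are both non-identity and differ. -/
def commExp {n : ℕ} (s t : Fin n → Fin 4) : ZMod 2 :=
  ((Finset.univ.filter fun i => s i ≠ 0 ∧ t i ≠ 0 ∧ s i ≠ t i).card : ZMod 2)

/-- The real sign `(-1)^{s·t}`. -/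
noncomputable def pauliSign {n : ℕ} (s t : Fin n → Fin 4) : ℝ :=
  (-1 : ℝ) ^ (commExp s t).val

lemma pauli_comm (a b : Fin 4) :
    pauli a * pauli b =
      (if a ≠ 0 ∧ b ≠ 0 ∧ a ≠ b then (-1 : ℂ) else 1) • (pauli b * pauli a) := by
  fin_cases a <;> fin_cases b <;> simp [pauli]

lemma pauliString_mul_apply {n : ℕ} (s t : Fin n → Fin 4) (x y : Fin n → Fin 2) :
    (pauliString s * pauliString t) x y = ∏ i, (pauli (s i) * pauli (t i)) (x i) (y i) := by
  simp only [pauliString, Matrix.mul_apply, Matrix.of_apply, Fintype.prod_sum,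
    ← Finset.prod_mul_distrib]

/-- Pauli strings satisfy `P_s * P_t = (-1)^{s·t} • (P_t * P_s)`. -/
theorem pauliString_mul_comm {n : ℕ} (hn : 0 < n) (s t : Fin n → Fin 4) :
    pauliString s * pauliString t =
      (pauliSign s t : ℂ) • (pauliString t * pauliString s) := by
  ext x y
  rw [Matrix.smul_apply, pauliString_mul_apply, pauliString_mul_apply]
  have h : ∀ i : Fin n, (pauli (s i) * pauli (t i)) (x i) (y i)
      = (if s i ≠ 0 ∧ t i ≠ 0 ∧ s i ≠ t i then (-1 : ℂ) else 1)
        * (pauli (t i) * pauli (s i)) (x i) (y i) := by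
    intro i
    rw [pauli_comm (s i) (t i)]
    simp
  simp_rw [h]
  rw [Finset.prod_mul_distrib, Finset.prod_ite, Finset.prod_const, Finset.prod_const, one_pow,
    mul_one]
  congr 1
  have hcard : (commExp s t).val
      = (Finset.univ.filter fun i => s i ≠ 0 ∧ t i ≠ 0 ∧ s i ≠ t i).card % 2 := by
    simp [commExp, ZMod.val_natCast]
  rw [pauliSign, hcard, ← neg_one_pow_eq_pow_mod_two]
  push_cast
  ring
end

section
/- Pauli twirl identity: for every 2^n × 2^n complex matrix X and every s : Fin n → Fin 4, 4^{-n} Σ_{t : Fin n → Fin 4} (-1)^{s·t} (P_t * X * P_t) = (2^{-n} trace(P_s * X)) • P_s. -/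
open Matrix

/-! Entrywise, `(P_t X P_t)_{ab} = ∑_{x,y} X_{xy} (P_t)_{ax} (P_t)_{yb}`, so the twirl is
determined by the kernel `∑_t (-1)^{s·t} (P_t)_{ax} (P_t)_{yb}`, and the identity amounts to this
kernel being `2^n (P_s)_{ab} (P_s)_{yx}`. Both the sign and the Pauli strings factor over the
qubits, so the kernel is a product of single-qubit kernels
`∑_j ε(k,j) (σ_j)_{ax} (σ_j)_{yb} = 2 (σ_k)_{ab} (σ_k)_{yx}`, where `ε(k,j) = -1` iff `σ_k` and
`σ_j` anticommute; these are checked case by case. -/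

def qubitSign (k j : Fin 4) : ℂ := if k ≠ 0 ∧ j ≠ 0 ∧ k ≠ j then -1 else 1

lemma pauliSign_eq_prod_qubitSign {n : ℕ} (s t : Fin n → Fin 4) :
    (pauliSign s t : ℂ) = ∏ i, qubitSign (s i) (t i) := by
  rw [pauliSign, commExp, ZMod.val_natCast, ← neg_one_pow_eq_pow_mod_two]
  simp [qubitSign, Finset.prod_ite]

lemma sum_qubitSign_mul_pauli_apply (k : Fin 4) (a b x y : Fin 2) :
    ∑ j, qubitSign k j * (pauli j a x * pauli j y b) = 2 * (pauli k a b * pauli k y x) := by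
  fin_cases k <;> fin_cases a <;> fin_cases b <;> fin_cases x <;> fin_cases y <;>
    simp [qubitSign, pauli, Fin.sum_univ_four] <;> ring_nf

lemma sum_pauliSign_mul_pauliString_apply {n : ℕ} (s : Fin n → Fin 4)
    (a b x y : Fin n → Fin 2) :
    ∑ t, (pauliSign s t : ℂ) * (pauliString t a x * pauliString t y b) =
      2 ^ n * (pauliString s a b * pauliString s y x) := by
  simp only [pauliSign_eq_prod_qubitSign, pauliString, of_apply, ← Finset.prod_mul_distrib]
  rw [← Fintype.prod_sum fun i j =>
    qubitSign (s i) j * (pauli j (a i) (x i) * pauli j (y i) (b i))]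
  simp only [sum_qubitSign_mul_pauli_apply, Finset.prod_mul_distrib, Finset.prod_const,
    Finset.card_univ, Fintype.card_fin]

theorem sum_smul_mul_mul_eq_trace_smul {ι m R : Type*} [Fintype ι] [Fintype m] [CommSemiring R]
    (w : ι → R) (M : ι → Matrix m m R) (P : Matrix m m R) (c : R)
    (h : ∀ a b x y, ∑ t, w t * (M t a x * M t y b) = c * (P a b * P y x)) (X : Matrix m m R) :
    ∑ t, w t • (M t * X * M t) = (c * (P * X).trace) • P := by
  ext a b
  have conj_apply : ∀ t, (M t * X * M t) a b = ∑ x, ∑ y, X x y * (M t a x * M t y b) := by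
    intro t
    simp only [mul_apply, Finset.sum_mul]
    rw [Finset.sum_comm]
    exact Finset.sum_congr rfl fun _ _ => Finset.sum_congr rfl fun _ _ => by ring
  calc (∑ t, w t • (M t * X * M t)) a b
      = ∑ x, ∑ y, X x y * ∑ t, w t * (M t a x * M t y b) := by
        simp only [Matrix.sum_apply, Matrix.smul_apply, smul_eq_mul, conj_apply, Finset.mul_sum]
        rw [Finset.sum_comm]
        refine Finset.sum_congr rfl fun _ _ => ?_
        rw [Finset.sum_comm]
        exact Finset.sum_congr rfl fun _ _ => Finset.sum_congr rfl fun _ _ => by ring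
    _ = ((c * (P * X).trace) • P) a b := by
        simp only [h, trace, diag, mul_apply, Matrix.smul_apply, smul_eq_mul, Finset.sum_mul,
          Finset.mul_sum]
        rw [Finset.sum_comm]
        exact Finset.sum_congr rfl fun _ _ => Finset.sum_congr rfl fun _ _ => by ring

theorem pauli_twirl_eq_general {n : ℕ}
    (X : Matrix (Fin n → Fin 2) (Fin n → Fin 2) ℂ) (s : Fin n → Fin 4) :
    ((4 : ℂ) ^ n)⁻¹ • ∑ t : Fin n → Fin 4,
        (pauliSign s t : ℂ) • (pauliString t * X * pauliString t) =
      (((2 : ℂ) ^ n)⁻¹ * (pauliString s * X).trace) • pauliString s := by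
  rw [sum_smul_mul_mul_eq_trace_smul _ _ _ _ (sum_pauliSign_mul_pauliString_apply s) X,
    smul_smul, show (4 : ℂ) ^ n = 2 ^ n * 2 ^ n by rw [← mul_pow]; norm_num]
  congr 1
  field_simp

/-- Pauli twirl identity:
`4^{-n} Σ_t (-1)^{s·t} P_t X P_t = (2^{-n} tr(P_s X)) • P_s`. -/
theorem pauli_twirl_eq {n : ℕ} (hn : 0 < n)
    (X : Matrix (Fin n → Fin 2) (Fin n → Fin 2) ℂ) (s : Fin n → Fin 4) :
    ((4 : ℂ) ^ n)⁻¹ • ∑ t : Fin n → Fin 4,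
        (pauliSign s t : ℂ) • (pauliString t * X * pauliString t) =
      (((2 : ℂ) ^ n)⁻¹ * (pauliString s * X).trace) • pauliString s :=
  pauli_twirl_eq_general X s
end

section
/- Fourier representation of the symmetrized relative entropy: for strictly positive probability distributions μ and ν on (Fin n → Fin 4), D(μ‖ν) + D(ν‖μ) = 4^{-n} Σ_{t : Fin n → Fin 4} (α_μ(t) − α_ν(t)) (λ_μ(t) − λ_ν(t)), where α_μ(t) := Σ_s (-1)^{s·t} μ(s) and λ_μ(t) := Σ_s (-1)^{s·t} log μ(s), and similarly for ν. -/
/-- The Fourier coefficient `α_μ(t) = Σ_s (-1)^{s·t} μ(s)`. -/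
noncomputable def pauliFourier {n : ℕ} (μ : (Fin n → Fin 4) → ℝ)
    (t : Fin n → Fin 4) : ℝ :=
  ∑ s : Fin n → Fin 4, pauliSign s t * μ s

/-- The relative entropy (KL divergence) of strictly positive distributions on a
finite set, `D(μ‖ν) = Σ_x μ(x) (log μ(x) − log ν(x))`, with natural logarithm. -/
noncomputable def klDiv {S : Type*} [Fintype S] (μ ν : S → ℝ) : ℝ :=
  ∑ x : S, μ x * (Real.log (μ x) - Real.log (ν x))

/-- The log-Fourier coefficient `λ_μ(t) = Σ_s (-1)^{s·t} log μ(s)`. -/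
noncomputable def pauliLogFourier {n : ℕ} (μ : (Fin n → Fin 4) → ℝ)
    (t : Fin n → Fin 4) : ℝ :=
  ∑ s : Fin n → Fin 4, pauliSign s t * Real.log (μ s)


def csign (a b : Fin 4) : ℕ := if a ≠ 0 ∧ b ≠ 0 ∧ a ≠ b then 1 else 0

lemma pauliSign_eq {n : ℕ} (s t : Fin n → Fin 4) :
    pauliSign s t = ∏ i, (-1 : ℝ) ^ csign (s i) (t i) := by
  unfold pauliSign commExp
  rw [ZMod.val_natCast, ← neg_one_pow_eq_pow_mod_two, Finset.card_filter]
  rw [Finset.prod_pow_eq_pow_sum]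
  rfl

lemma sum_sign_mul (a b : Fin 4) :
    ∑ x : Fin 4, ((-1:ℝ) ^ csign a x) * ((-1:ℝ) ^ csign b x) = if a = b then 4 else 0 := by
  fin_cases a <;> fin_cases b <;> simp [Fin.sum_univ_four, csign] <;> norm_num

lemma sum_pauliSign_mul {n : ℕ} (s s' : Fin n → Fin 4) :
    ∑ t : Fin n → Fin 4, pauliSign s t * pauliSign s' t
      = if s = s' then (4:ℝ) ^ n else 0 := by
  simp_rw [pauliSign_eq, ← Finset.prod_mul_distrib]
  have h0 := Finset.sum_prod_piFinset (Finset.univ : Finset (Fin 4))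
    (fun i x => ((-1:ℝ) ^ csign (s i) x) * ((-1:ℝ) ^ csign (s' i) x))
  rw [Fintype.piFinset_univ] at h0
  rw [h0]
  simp_rw [sum_sign_mul]
  by_cases h : s = s'
  · subst h; simp
  · rw [if_neg h]
    obtain ⟨i, hi⟩ := Function.ne_iff.mp h
    exact Finset.prod_eq_zero (Finset.mem_univ i) (by simp [hi])

/-- Fourier representation of the symmetrized relative entropy:
`D(μ‖ν) + D(ν‖μ) = 4^{-n} Σ_t (α_μ(t) − α_ν(t)) (λ_μ(t) − λ_ν(t))`. -/
theorem symmetrized_klDiv_fourier {n : ℕ} (μ ν : (Fin n → Fin 4) → ℝ)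
    (hμpos : ∀ s, 0 < μ s) (hνpos : ∀ s, 0 < ν s)
    (hμsum : ∑ s : Fin n → Fin 4, μ s = 1) (hνsum : ∑ s : Fin n → Fin 4, ν s = 1) :
    klDiv μ ν + klDiv ν μ =
      ((4 : ℝ) ^ n)⁻¹ * ∑ t : Fin n → Fin 4,
        (pauliFourier μ t - pauliFourier ν t) *
        (pauliLogFourier μ t - pauliLogFourier ν t) := by
  have key : ∀ t : Fin n → Fin 4,
      (pauliFourier μ t - pauliFourier ν t) *
        (pauliLogFourier μ t - pauliLogFourier ν t)
      = ∑ s : Fin n → Fin 4, ∑ s' : Fin n → Fin 4,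
          (pauliSign s t * pauliSign s' t) *
            ((μ s - ν s) * (Real.log (μ s') - Real.log (ν s'))) := by
    intro t
    rw [pauliFourier, pauliFourier, pauliLogFourier, pauliLogFourier,
      ← Finset.sum_sub_distrib, ← Finset.sum_sub_distrib, Finset.sum_mul_sum]
    exact Finset.sum_congr rfl fun s _ => Finset.sum_congr rfl fun s' _ => by ring
  simp_rw [key]
  rw [Finset.sum_comm]
  have key2 : ∀ s : Fin n → Fin 4,
      ∑ t : Fin n → Fin 4, ∑ s' : Fin n → Fin 4,
        (pauliSign s t * pauliSign s' t) *
          ((μ s - ν s) * (Real.log (μ s') - Real.log (ν s')))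
      = (4:ℝ) ^ n * ((μ s - ν s) * (Real.log (μ s) - Real.log (ν s))) := by
    intro s
    rw [Finset.sum_comm]
    have : ∀ s' : Fin n → Fin 4,
        ∑ t : Fin n → Fin 4, (pauliSign s t * pauliSign s' t) *
          ((μ s - ν s) * (Real.log (μ s') - Real.log (ν s')))
        = (if s = s' then (4:ℝ)^n else 0) *
            ((μ s - ν s) * (Real.log (μ s') - Real.log (ν s'))) := by
      intro s'
      rw [← Finset.sum_mul, sum_pauliSign_mul]
    simp_rw [this, ite_mul, zero_mul]
    rw [Finset.sum_ite_eq (Finset.univ) s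
      (fun s' => (4:ℝ)^n * ((μ s - ν s) * (Real.log (μ s') - Real.log (ν s'))))]
    simp
  simp_rw [key2]
  rw [← Finset.mul_sum, ← mul_assoc, inv_mul_cancel₀ (by positivity), one_mul]
  rw [klDiv, klDiv, ← Finset.sum_add_distrib]
  exact Finset.sum_congr rfl fun s _ => by ring
end

section
/- Total variation bound under strong convexity of the Gibbs parametrization: let μ and ν be strictly positive probability distributions on (Fin n → Fin 4) and Γ ≥ 0 a real number such that Σ_t (α_μ(t) − α_ν(t))² ≤ Γ² Σ_t (λ_μ(t) − λ_ν(t))², where α_μ(t) := Σ_s (-1)^{s·t} μ(s) and λ_μ(t) := Σ_s (-1)^{s·t} log μ(s) (and similarly for ν). Then (Σ_s |μ(s) − ν(s)|)² ≤ Γ · 4^{-n} Σ_t (λ_μ(t) − λ_ν(t))². -/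
/-- Single-qubit sign. -/
noncomputable def eSign (a b : Fin 4) : ℝ :=
  if a ≠ 0 ∧ b ≠ 0 ∧ a ≠ b then -1 else 1

lemma pauliSign_eq_prod {n : ℕ} (s t : Fin n → Fin 4) :
    pauliSign s t = ∏ i : Fin n, eSign (s i) (t i) := by
  unfold pauliSign commExp eSign
  rw [ZMod.val_natCast, ← neg_one_pow_eq_pow_mod_two, Finset.prod_ite, Finset.prod_const,
    Finset.prod_const, one_pow, mul_one]

lemma eSign_ortho (a a' : Fin 4) :
    ∑ b : Fin 4, eSign a b * eSign a' b = if a = a' then 4 else 0 := by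
  fin_cases a <;> fin_cases a' <;>
    simp [eSign, Fin.sum_univ_four] <;> norm_num

lemma sign_ortho {n : ℕ} (s s' : Fin n → Fin 4) :
    ∑ t : Fin n → Fin 4, pauliSign s t * pauliSign s' t
      = if s = s' then (4 : ℝ) ^ n else 0 := by
  have h1 : ∀ t : Fin n → Fin 4, pauliSign s t * pauliSign s' t
      = ∏ i : Fin n, (eSign (s i) (t i) * eSign (s' i) (t i)) := by
    intro t
    rw [pauliSign_eq_prod, pauliSign_eq_prod, Finset.prod_mul_distrib]
  simp_rw [h1]
  rw [← Fintype.prod_sum (fun (i : Fin n) (b : Fin 4) => eSign (s i) b * eSign (s' i) b)]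
  simp_rw [eSign_ortho]
  by_cases h : s = s'
  · subst h
    simp
  · rw [if_neg h]
    obtain ⟨i, hi⟩ := Function.ne_iff.mp h
    exact Finset.prod_eq_zero (Finset.mem_univ i) (if_neg hi)

lemma parseval {n : ℕ} (f : (Fin n → Fin 4) → ℝ) :
    ∑ t : Fin n → Fin 4, (∑ s : Fin n → Fin 4, pauliSign s t * f s) ^ 2
      = 4 ^ n * ∑ s : Fin n → Fin 4, f s ^ 2 := by
  have h1 : ∀ t : Fin n → Fin 4, (∑ s : Fin n → Fin 4, pauliSign s t * f s) ^ 2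
      = ∑ s : Fin n → Fin 4, ∑ s' : Fin n → Fin 4,
          (f s * f s') * (pauliSign s t * pauliSign s' t) := by
    intro t
    rw [sq, Finset.sum_mul_sum]
    apply Finset.sum_congr rfl; intro s _
    apply Finset.sum_congr rfl; intro s' _
    ring
  simp_rw [h1]
  rw [Finset.sum_comm]
  have h2 : ∀ s, ∑ t : Fin n → Fin 4, ∑ s' : Fin n → Fin 4,
      (f s * f s') * (pauliSign s t * pauliSign s' t)
      = ∑ s' : Fin n → Fin 4, (f s * f s') * ∑ t, pauliSign s t * pauliSign s' t := by
    intro s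
    rw [Finset.sum_comm]
    simp_rw [← Finset.mul_sum]
  simp_rw [h2, sign_ortho]
  simp [mul_comm, sq, Finset.mul_sum]

lemma log_ge_aux {r : ℝ} (hr : 1 ≤ r) : 2 * (r - 1) / (r + 1) ≤ Real.log r := by
  set g : ℝ → ℝ := fun x => Real.log x + 4 / (x + 1) with hg
  have key : MonotoneOn g (Set.Ici 1) := by
    apply monotoneOn_of_deriv_nonneg (convex_Ici 1)
    · apply ContinuousOn.add
      · exact Real.continuousOn_log.mono (by intro x hx; simp at hx ⊢; linarith)
      · apply ContinuousOn.div continuousOn_const (by fun_prop)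
        intro x hx; simp at hx; intro h; linarith
    · intro x hx
      rw [interior_Ici] at hx
      simp only [Set.mem_Ioi] at hx
      have hx0 : x ≠ 0 := by linarith
      have hx1 : x + 1 ≠ 0 := by linarith
      apply DifferentiableAt.differentiableWithinAt
      exact (Real.differentiableAt_log hx0).add
        ((differentiableAt_const (4:ℝ)).div (by fun_prop) hx1)
    · intro x hx
      rw [interior_Ici] at hx
      simp only [Set.mem_Ioi] at hx
      have hx0 : (0:ℝ) < x := by linarith
      have hx1 : x + 1 ≠ 0 := by positivity
      have hd : HasDerivAt g (x⁻¹ + (0 * (x + 1) - 4 * 1) / (x + 1) ^ 2) x := by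
        apply (Real.hasDerivAt_log (ne_of_gt hx0)).add
        exact (hasDerivAt_const x (4:ℝ)).div ((hasDerivAt_id x).add_const 1) hx1
      rw [hd.deriv]
      have h4 : 4 / (x + 1) ^ 2 ≤ x⁻¹ := by
        rw [div_le_iff₀ (by positivity), inv_mul_eq_div, le_div_iff₀ hx0]
        nlinarith
      have : (0 * (x + 1) - 4 * 1) / (x + 1) ^ 2 = -(4 / (x + 1) ^ 2) := by ring
      rw [this]
      linarith
  have h2 := key (Set.mem_Ici.mpr le_rfl) (Set.mem_Ici.mpr hr) hr
  have hg1 : g 1 = 2 := by simp [hg]; norm_num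
  have hr1 : r + 1 > 0 := by linarith
  rw [hg1, hg] at h2
  simp only at h2
  rw [div_le_iff₀ hr1]
  have : 4 / (r + 1) * (r + 1) = 4 := by field_simp
  nlinarith [h2, this]

lemma logMean {x y : ℝ} (hy : 0 < y) (hxy : y ≤ x) :
    2 * (x - y) ^ 2 / (x + y) ≤ (x - y) * (Real.log x - Real.log y) := by
  have hx : 0 < x := lt_of_lt_of_le hy hxy
  have hr : 1 ≤ x / y := (one_le_div hy).mpr hxy
  have h1 := log_ge_aux hr
  rw [Real.log_div (ne_of_gt hx) (ne_of_gt hy)] at h1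
  have h2 : 2 * (x / y - 1) / (x / y + 1) = 2 * (x - y) / (x + y) := by
    rw [div_eq_div_iff (by positivity) (by positivity)]
    field_simp
  rw [h2] at h1
  have h3 : 2 * (x - y) ^ 2 / (x + y) = (x - y) * (2 * (x - y) / (x + y)) := by
    field_simp
  rw [h3]
  exact mul_le_mul_of_nonneg_left h1 (by linarith)

lemma tv_sq_le_symKL {n : ℕ} (μ ν : (Fin n → Fin 4) → ℝ)
    (hμpos : ∀ s, 0 < μ s) (hνpos : ∀ s, 0 < ν s)
    (hμsum : ∑ s : Fin n → Fin 4, μ s = 1) (hνsum : ∑ s : Fin n → Fin 4, ν s = 1) :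
    (∑ s : Fin n → Fin 4, |μ s - ν s|) ^ 2 ≤
      ∑ s : Fin n → Fin 4, (μ s - ν s) * (Real.log (μ s) - Real.log (ν s)) := by
  set w : (Fin n → Fin 4) → ℝ := fun s => (μ s + ν s) / 2 with hw
  have hwpos : ∀ s, 0 < w s := fun s => by
    have := hμpos s; have := hνpos s; simp [hw]; linarith
  have hwsum : ∑ s : Fin n → Fin 4, w s = 1 := by
    simp only [hw]
    rw [← Finset.sum_div, Finset.sum_add_distrib, hμsum, hνsum]
    norm_num
  have hcs := Finset.sum_mul_sq_le_sq_mul_sq Finset.univ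
    (fun s => Real.sqrt (w s)) (fun s => |μ s - ν s| / Real.sqrt (w s))
  have he1 : ∀ s : Fin n → Fin 4,
      Real.sqrt (w s) * (|μ s - ν s| / Real.sqrt (w s)) = |μ s - ν s| := fun s => by
    rw [mul_comm, div_mul_cancel₀ _ (ne_of_gt (Real.sqrt_pos.mpr (hwpos s)))]
  have he2 : ∀ s : Fin n → Fin 4, Real.sqrt (w s) ^ 2 = w s := fun s =>
    Real.sq_sqrt (hwpos s).le
  have he3 : ∀ s : Fin n → Fin 4,
      (|μ s - ν s| / Real.sqrt (w s)) ^ 2 = (μ s - ν s) ^ 2 / w s := fun s => by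
    rw [div_pow, sq_abs, he2]
  simp_rw [he1, he2, he3, hwsum, one_mul] at hcs
  refine hcs.trans (Finset.sum_le_sum fun s _ => ?_)
  have hwdef : (μ s - ν s) ^ 2 / w s = 2 * (μ s - ν s) ^ 2 / (μ s + ν s) := by
    rw [hw]; field_simp
  rw [hwdef]
  rcases le_total (ν s) (μ s) with h | h
  · exact logMean (hνpos s) h
  · have := logMean (hμpos s) h
    have e1 : 2 * (ν s - μ s) ^ 2 / (ν s + μ s) = 2 * (μ s - ν s) ^ 2 / (μ s + ν s) := by
      ring_nf
    have e2 : (ν s - μ s) * (Real.log (ν s) - Real.log (μ s))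
        = (μ s - ν s) * (Real.log (μ s) - Real.log (ν s)) := by ring
    rw [e1, e2] at this
    exact this

/-- Total variation bound under strong convexity of the Gibbs
parametrization: if `Σ_t (α_μ(t) − α_ν(t))² ≤ Γ² Σ_t (λ_μ(t) − λ_ν(t))²`, then
`(Σ_s |μ(s) − ν(s)|)² ≤ Γ · 4^{-n} Σ_t (λ_μ(t) − λ_ν(t))²`. -/
theorem tv_bound_of_strong_convexity {n : ℕ} (μ ν : (Fin n → Fin 4) → ℝ)
    (hμpos : ∀ s, 0 < μ s) (hνpos : ∀ s, 0 < ν s)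
    (hμsum : ∑ s : Fin n → Fin 4, μ s = 1) (hνsum : ∑ s : Fin n → Fin 4, ν s = 1)
    (Γ : ℝ) (hΓ : 0 ≤ Γ)
    (hconv : ∑ t : Fin n → Fin 4, (pauliFourier μ t - pauliFourier ν t) ^ 2 ≤
      Γ ^ 2 * ∑ t : Fin n → Fin 4, (pauliLogFourier μ t - pauliLogFourier ν t) ^ 2) :
    (∑ s : Fin n → Fin 4, |μ s - ν s|) ^ 2 ≤
      Γ * ((4 : ℝ) ^ n)⁻¹ *
        ∑ t : Fin n → Fin 4, (pauliLogFourier μ t - pauliLogFourier ν t) ^ 2 := by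
  set d : (Fin n → Fin 4) → ℝ := fun s => μ s - ν s with hd
  set l : (Fin n → Fin 4) → ℝ := fun s => Real.log (μ s) - Real.log (ν s) with hl
  have h4n : (0:ℝ) < 4 ^ n := by positivity
  -- Parseval for d
  have hPd : ∑ t : Fin n → Fin 4, (pauliFourier μ t - pauliFourier ν t) ^ 2
      = 4 ^ n * ∑ s : Fin n → Fin 4, d s ^ 2 := by
    have : ∀ t : Fin n → Fin 4, pauliFourier μ t - pauliFourier ν t
        = ∑ s : Fin n → Fin 4, pauliSign s t * d s := by
      intro t
      unfold pauliFourier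
      rw [← Finset.sum_sub_distrib]
      exact Finset.sum_congr rfl fun s _ => by rw [hd]; ring
    simp_rw [this]
    exact parseval d
  have hPl : ∑ t : Fin n → Fin 4, (pauliLogFourier μ t - pauliLogFourier ν t) ^ 2
      = 4 ^ n * ∑ s : Fin n → Fin 4, l s ^ 2 := by
    have : ∀ t : Fin n → Fin 4, pauliLogFourier μ t - pauliLogFourier ν t
        = ∑ s : Fin n → Fin 4, pauliSign s t * l s := by
      intro t
      unfold pauliLogFourier
      rw [← Finset.sum_sub_distrib]
      exact Finset.sum_congr rfl fun s _ => by rw [hl]; ring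
    simp_rw [this]
    exact parseval l
  set L : ℝ := ∑ t : Fin n → Fin 4, (pauliLogFourier μ t - pauliLogFourier ν t) ^ 2 with hL
  have hLnn : 0 ≤ L := Finset.sum_nonneg fun t _ => sq_nonneg _
  -- step 1 : TV² ≤ ∑ d l
  have h1 : (∑ s : Fin n → Fin 4, |μ s - ν s|) ^ 2 ≤ ∑ s : Fin n → Fin 4, d s * l s :=
    tv_sq_le_symKL μ ν hμpos hνpos hμsum hνsum
  -- step 2 : Cauchy-Schwarz
  have h2 : (∑ s : Fin n → Fin 4, d s * l s) ^ 2
      ≤ (∑ s : Fin n → Fin 4, d s ^ 2) * ∑ s : Fin n → Fin 4, l s ^ 2 :=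
    Finset.sum_mul_sq_le_sq_mul_sq Finset.univ d l
  have hdl_nn : 0 ≤ ∑ s : Fin n → Fin 4, d s * l s := by
    apply Finset.sum_nonneg
    intro s _
    rcases le_total (ν s) (μ s) with h | h
    · apply mul_nonneg
      · simp [hd]; linarith
      · simp [hl]
        exact Real.log_le_log (hνpos s) h
    · have ha : d s ≤ 0 := by simp [hd]; linarith
      have hb : l s ≤ 0 := by
        simp [hl]
        exact Real.log_le_log (hμpos s) h
      nlinarith
  -- combine
  have hD : ∑ s : Fin n → Fin 4, d s ^ 2 ≤ Γ ^ 2 * L / 4 ^ n := by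
    rw [le_div_iff₀ h4n]
    calc (∑ s : Fin n → Fin 4, d s ^ 2) * 4 ^ n
        = ∑ t : Fin n → Fin 4, (pauliFourier μ t - pauliFourier ν t) ^ 2 := by
          rw [hPd]; ring
      _ ≤ Γ ^ 2 * L := hconv
  have hE : ∑ s : Fin n → Fin 4, l s ^ 2 = L / 4 ^ n := by
    rw [eq_div_iff (ne_of_gt h4n), hPl]; ring
  have h3 : (∑ s : Fin n → Fin 4, d s * l s) ^ 2 ≤ (Γ * (4 ^ n)⁻¹ * L) ^ 2 := by
    calc (∑ s : Fin n → Fin 4, d s * l s) ^ 2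
        ≤ (∑ s : Fin n → Fin 4, d s ^ 2) * ∑ s : Fin n → Fin 4, l s ^ 2 := h2
      _ ≤ (Γ ^ 2 * L / 4 ^ n) * (L / 4 ^ n) := by
          apply mul_le_mul hD (le_of_eq hE)
            (Finset.sum_nonneg fun s _ => sq_nonneg _)
            (by positivity)
      _ = (Γ * (4 ^ n)⁻¹ * L) ^ 2 := by field_simp
  have hRnn : 0 ≤ Γ * (4 ^ n : ℝ)⁻¹ * L := by
    apply mul_nonneg (mul_nonneg hΓ (by positivity)) hLnn
  have h4 : ∑ s : Fin n → Fin 4, d s * l s ≤ Γ * (4 ^ n : ℝ)⁻¹ * L := by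
    nlinarith [h3, hdl_nn, hRnn]
  exact h1.trans h4
end

section
/- Conditional probability lower bound for Gibbs distributions: let H be a finite family of subsets of Fin n, and for each h ∈ H let θ^h : (Fin n → Fin 4) → ℝ be a function depending only on the coordinates in h. Let μ be the probability distribution on (Fin n → Fin 4) with μ(x) = exp(Σ_{h ∈ H} θ^h(x)) / Z, where Z = Σ_y exp(Σ_h θ^h(y)). Set γ := max_{u ∈ Fin n} Σ_{h ∈ H, u ∈ h} max_x |θ^h(x)|. Then for every site u ∈ Fin n, every a ∈ Fin 4, and every configuration x : Fin n → Fin 4, the conditional probability that the coordinate at u equals a given that all other coordinates agree with x satisfies μ(X_u = a | X_j = x_j for all j ≠ u) ≥ (1/4) e^{−2γ}. -/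
/-- Conditional probability lower bound for Gibbs distributions:
for the Gibbs distribution `μ(x) = exp(Σ_{h ∈ H} θ^h(x)) / Z` with local potentials
`θ^h` and `γ := max_u Σ_{h ∋ u} max_x |θ^h(x)|`, every single-site conditional
probability is at least `(1/4) e^{−2γ}`. -/
theorem gibbs_conditional_lower_bound {n : ℕ} (hn : 0 < n)
    (H : Finset (Finset (Fin n))) (θ : Finset (Fin n) → (Fin n → Fin 4) → ℝ)
    (hloc : ∀ h ∈ H, ∀ x y : Fin n → Fin 4, (∀ i ∈ h, x i = y i) → θ h x = θ h y)
    (μ : (Fin n → Fin 4) → ℝ)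
    (hμ : ∀ x, μ x = Real.exp (∑ h ∈ H, θ h x) /
      ∑ y : Fin n → Fin 4, Real.exp (∑ h ∈ H, θ h y))
    (γ : ℝ)
    (hγ : γ = Finset.univ.sup'
      (Finset.univ_nonempty_iff.mpr (Fin.pos_iff_nonempty.mp hn))
      fun u : Fin n => ∑ h ∈ H.filter (fun h => u ∈ h),
        Finset.univ.sup' Finset.univ_nonempty
          fun x : Fin n → Fin 4 => |θ h x|) :
    ∀ (u : Fin n) (a : Fin 4) (x : Fin n → Fin 4),
      μ (Function.update x u a) / ∑ b : Fin 4, μ (Function.update x u b) ≥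
        (1 / 4) * Real.exp (-2 * γ) := by
  intro u a x
  set Z : ℝ := ∑ y : Fin n → Fin 4, Real.exp (∑ h ∈ H, θ h y) with hZ
  have hZpos : 0 < Z :=
    Finset.sum_pos (fun y _ => Real.exp_pos _) ⟨fun _ => 0, Finset.mem_univ _⟩
  set S : Fin 4 → ℝ := fun b => ∑ h ∈ H, θ h (Function.update x u b) with hS
  -- γu ≤ γ
  have hγu : (∑ h ∈ H.filter (fun h => u ∈ h),
      Finset.univ.sup' Finset.univ_nonempty fun x : Fin n → Fin 4 => |θ h x|) ≤ γ := by
    rw [hγ]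
    exact Finset.le_sup' (fun u : Fin n => ∑ h ∈ H.filter (fun h => u ∈ h),
      Finset.univ.sup' Finset.univ_nonempty fun x : Fin n → Fin 4 => |θ h x|)
      (Finset.mem_univ u)
  have key : ∀ b : Fin 4, S b - S a ≤ 2 * γ := by
    intro b
    have hsplit : S b - S a = ∑ h ∈ H.filter (fun h => u ∈ h),
        (θ h (Function.update x u b) - θ h (Function.update x u a)) := by
      rw [hS, ← Finset.sum_sub_distrib]
      refine (Finset.sum_filter_of_ne ?_).symm
      intro h hh hne
      by_contra hu
      apply hne
      have := hloc h hh (Function.update x u b) (Function.update x u a) ?_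
      · rw [this]; ring
      · intro i hi
        have hiu : i ≠ u := fun e => hu (e ▸ hi)
        simp [Function.update_of_ne hiu]
    rw [hsplit]
    calc ∑ h ∈ H.filter (fun h => u ∈ h),
        (θ h (Function.update x u b) - θ h (Function.update x u a))
        ≤ ∑ h ∈ H.filter (fun h => u ∈ h),
          2 * Finset.univ.sup' Finset.univ_nonempty (fun x : Fin n → Fin 4 => |θ h x|) := by
          refine Finset.sum_le_sum fun h hh => ?_
          have h1 : θ h (Function.update x u b) ≤
              Finset.univ.sup' Finset.univ_nonempty (fun x : Fin n → Fin 4 => |θ h x|) :=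
            le_trans (le_abs_self _) (Finset.le_sup' (fun y : Fin n → Fin 4 => |θ h y|) (Finset.mem_univ _))
          have h2 : -θ h (Function.update x u a) ≤
              Finset.univ.sup' Finset.univ_nonempty (fun x : Fin n → Fin 4 => |θ h x|) :=
            le_trans (neg_le_abs _) (Finset.le_sup' (fun y : Fin n → Fin 4 => |θ h y|) (Finset.mem_univ _))
          linarith
      _ = 2 * ∑ h ∈ H.filter (fun h => u ∈ h),
          Finset.univ.sup' Finset.univ_nonempty (fun x : Fin n → Fin 4 => |θ h x|) := by
          rw [Finset.mul_sum]
      _ ≤ 2 * γ := by linarith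
  have hμupd : ∀ b : Fin 4, μ (Function.update x u b) = Real.exp (S b) / Z := fun b => hμ _
  have hT : ∀ b : Fin 4, Real.exp (S b) ≤ Real.exp (2 * γ) * Real.exp (S a) := by
    intro b
    rw [← Real.exp_add]
    exact Real.exp_le_exp.mpr (by linarith [key b])
  have hTsum : (∑ b : Fin 4, Real.exp (S b)) ≤ 4 * (Real.exp (2 * γ) * Real.exp (S a)) := by
    calc (∑ b : Fin 4, Real.exp (S b)) ≤ ∑ _b : Fin 4, Real.exp (2 * γ) * Real.exp (S a) :=
        Finset.sum_le_sum fun b _ => hT b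
      _ = 4 * (Real.exp (2 * γ) * Real.exp (S a)) := by
        simp [Finset.sum_const, Finset.card_univ]
  have hTpos : 0 < ∑ b : Fin 4, Real.exp (S b) :=
    Finset.sum_pos (fun b _ => Real.exp_pos _) ⟨a, Finset.mem_univ _⟩
  have hratio : μ (Function.update x u a) / ∑ b : Fin 4, μ (Function.update x u b)
      = Real.exp (S a) / ∑ b : Fin 4, Real.exp (S b) := by
    simp only [hμupd]
    rw [← Finset.sum_div]
    field_simp
  rw [hratio, ge_iff_le, le_div_iff₀ hTpos]
  have e1 : Real.exp (-2 * γ) * Real.exp (2 * γ) = 1 := by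
    rw [← Real.exp_add]; norm_num
  have h4 : (1/4 : ℝ) * Real.exp (-2 * γ) * (4 * (Real.exp (2 * γ) * Real.exp (S a)))
      = Real.exp (S a) := by
    linear_combination Real.exp (S a) * e1
  calc (1/4 : ℝ) * Real.exp (-2 * γ) * ∑ b : Fin 4, Real.exp (S b)
      ≤ 1/4 * Real.exp (-2 * γ) * (4 * (Real.exp (2 * γ) * Real.exp (S a))) := by
        have := Real.exp_pos (-2 * γ)
        nlinarith [hTsum]
    _ = Real.exp (S a) := h4
end

section
/- SPAM-robust estimation identity: let μ be a probability distribution on (Fin n → Fin 4), let Φ₁ and Φ₂ be arbitrary linear maps on 2^n × 2^n complex matrices, let t : Fin n → Fin 4, and let k be a natural number. Then 2^{-n} trace( T_t(Φ₂(P_t)) * 𝒫_μ^k( T_t(Φ₁(P_t)) ) ) = (2^{-n} trace(P_t * Φ₂(P_t))) · (2^{-n} trace(P_t * Φ₁(P_t))) · (α_μ(t))^k. -/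
open Matrix

/-- The Pauli channel `𝒫_μ(ρ) = Σ_s μ(s) P_s ρ P_s` associated to an error
distribution `μ`. -/
noncomputable def pauliChannel {n : ℕ} (μ : (Fin n → Fin 4) → ℝ)
    (ρ : Matrix (Fin n → Fin 2) (Fin n → Fin 2) ℂ) :
    Matrix (Fin n → Fin 2) (Fin n → Fin 2) ℂ :=
  ∑ s : Fin n → Fin 4, (μ s : ℂ) • (pauliString s * ρ * pauliString s)

/-- The Pauli twirl `T_t(X) := 4^{-n} Σ_s (-1)^{s·t} P_s X P_s`. -/
noncomputable def twirl {n : ℕ} (t : Fin n → Fin 4)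
    (X : Matrix (Fin n → Fin 2) (Fin n → Fin 2) ℂ) :
    Matrix (Fin n → Fin 2) (Fin n → Fin 2) ℂ :=
  ((4 : ℂ) ^ n)⁻¹ • ∑ s : Fin n → Fin 4,
    (pauliSign s t : ℂ) • (pauliString s * X * pauliString s)

noncomputable def eps (a b : Fin 4) : ℂ := if a ≠ 0 ∧ b ≠ 0 ∧ a ≠ b then -1 else 1

lemma L3 (b : Fin 4) (x z w y : Fin 2) :
    ∑ a : Fin 4, eps a b * (pauli a x z * pauli a w y)
      = 2 * (pauli b x y * pauli b w z) := by
  fin_cases b <;> fin_cases x <;> fin_cases z <;> fin_cases w <;> fin_cases y <;>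
    simp [eps, pauli, Fin.sum_univ_four, Matrix.one_apply] <;> ring_nf

lemma pauli_sq (a : Fin 4) : pauli a * pauli a = 1 := by
  fin_cases a <;> simp [pauli] <;>
    ext i j <;> fin_cases i <;> fin_cases j <;>
      simp [Matrix.mul_apply, Fin.sum_univ_two, Matrix.one_apply, Complex.I_sq]

lemma sss1 (a b : Fin 4) : pauli a * pauli b * pauli a = eps a b • pauli b := by
  fin_cases a <;> fin_cases b <;>
    ext i j <;> fin_cases i <;> fin_cases j <;>
      simp [eps, pauli, Matrix.mul_apply, Fin.sum_univ_two, Matrix.one_apply,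
        Complex.I_sq]

lemma sign_prod {n : ℕ} (s t : Fin n → Fin 4) :
    (pauliSign s t : ℂ) = ∏ i, eps (s i) (t i) := by
  have h1 : (pauliSign s t : ℂ)
      = (-1 : ℂ) ^ (Finset.univ.filter fun i => s i ≠ 0 ∧ t i ≠ 0 ∧ s i ≠ t i).card := by
    rw [pauliSign, commExp]
    push_cast
    rw [ZMod.val_natCast]
    rcases Nat.even_or_odd ((Finset.univ.filter fun i => s i ≠ 0 ∧ t i ≠ 0 ∧ s i ≠ t i).card)
      with h | h
    · rw [Nat.even_iff.mp h, h.neg_one_pow]; norm_num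
    · rw [Nat.odd_iff.mp h, h.neg_one_pow]; norm_num
  rw [h1, show (∏ i, eps (s i) (t i))
      = ∏ i, (if s i ≠ 0 ∧ t i ≠ 0 ∧ s i ≠ t i then (-1:ℂ) else 1) from rfl,
    Finset.prod_ite]
  simp

lemma kron_mul {n : ℕ} (A B : Fin n → Matrix (Fin 2) (Fin 2) ℂ) :
    ((Matrix.of fun x y : Fin n → Fin 2 => ∏ i, A i (x i) (y i)) *
      (Matrix.of fun x y : Fin n → Fin 2 => ∏ i, B i (x i) (y i))) =
    Matrix.of fun x y : Fin n → Fin 2 => ∏ i, (A i * B i) (x i) (y i) := by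
  ext x y
  simp only [Matrix.mul_apply, Matrix.of_apply, ← Finset.prod_mul_distrib]
  rw [Finset.prod_univ_sum (fun _ => (Finset.univ : Finset (Fin 2)))
    (fun i a => A i (x i) a * B i a (y i)), Fintype.piFinset_univ]

lemma key_sum {n : ℕ} (t : Fin n → Fin 4) (x z w y : Fin n → Fin 2) :
    ∑ s : Fin n → Fin 4, (pauliSign s t : ℂ) * (pauliString s x z * pauliString s w y)
      = 2 ^ n * (pauliString t x y * pauliString t w z) := by
  have h : ∀ s : Fin n → Fin 4,
      (pauliSign s t : ℂ) * (pauliString s x z * pauliString s w y)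
        = ∏ i, (eps (s i) (t i) * (pauli (s i) (x i) (z i) * pauli (s i) (w i) (y i))) := by
    intro s
    rw [sign_prod]
    simp only [pauliString, Matrix.of_apply]
    rw [← Finset.prod_mul_distrib, ← Finset.prod_mul_distrib]
  simp only [h]
  rw [← Fintype.piFinset_univ,
    ← Finset.prod_univ_sum (fun _ => (Finset.univ : Finset (Fin 4)))
      (fun i a => eps a (t i) * (pauli a (x i) (z i) * pauli a (w i) (y i)))]
  have h2 : ∀ i : Fin n, ∑ a : Fin 4, eps a (t i) * (pauli a (x i) (z i) * pauli a (w i) (y i))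
      = 2 * (pauli (t i) (x i) (y i) * pauli (t i) (w i) (z i)) := fun i => L3 _ _ _ _ _
  simp only [h2]
  rw [Finset.prod_mul_distrib, Finset.prod_const, Finset.prod_mul_distrib]
  simp [pauliString, mul_assoc]

lemma pauliString_mul_self {n : ℕ} (t : Fin n → Fin 4) :
    pauliString t * pauliString t = 1 := by
  simp only [pauliString]
  rw [kron_mul]
  ext x y
  simp only [Matrix.of_apply, pauli_sq]
  by_cases hxy : x = y
  · simp [hxy, Matrix.one_apply]
  · obtain ⟨i, hi⟩ := Function.ne_iff.mp hxy
    rw [Matrix.one_apply_ne hxy]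
    exact Finset.prod_eq_zero (Finset.mem_univ i) (Matrix.one_apply_ne hi)

lemma sss_string {n : ℕ} (s t : Fin n → Fin 4) :
    pauliString s * pauliString t * pauliString s
      = (pauliSign s t : ℂ) • pauliString t := by
  simp only [pauliString]
  rw [kron_mul, kron_mul]
  ext x y
  simp only [Matrix.of_apply, sss1, Matrix.smul_apply, smul_eq_mul]
  rw [Finset.prod_mul_distrib, ← sign_prod]

noncomputable def twirlCoeff {n : ℕ} (t : Fin n → Fin 4)
    (X : Matrix (Fin n → Fin 2) (Fin n → Fin 2) ℂ) : ℂ :=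
  ((2 : ℂ) ^ n)⁻¹ * (pauliString t * X).trace

lemma two_pow_ne {n : ℕ} : ((2:ℂ)^n) ≠ 0 := pow_ne_zero _ two_ne_zero

lemma twirl_eq {n : ℕ} (t : Fin n → Fin 4)
    (X : Matrix (Fin n → Fin 2) (Fin n → Fin 2) ℂ) :
    (((4 : ℂ) ^ n)⁻¹ • ∑ s : Fin n → Fin 4,
      (pauliSign s t : ℂ) • (pauliString s * X * pauliString s))
      = twirlCoeff t X • pauliString t := by
  ext x y
  have expand : ∀ s : Fin n → Fin 4, (pauliString s * X * pauliString s) x y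
      = ∑ w, ∑ z, X z w * (pauliString s x z * pauliString s w y) := by
    intro s
    rw [Matrix.mul_apply]
    simp only [Matrix.mul_apply, Finset.sum_mul]
    exact Finset.sum_congr rfl fun w _ => Finset.sum_congr rfl fun z _ => by ring
  simp only [Matrix.smul_apply, Matrix.sum_apply, smul_eq_mul]
  have main : ∑ s : Fin n → Fin 4, (pauliSign s t : ℂ) * (pauliString s * X * pauliString s) x y
      = 2 ^ n * (pauliString t x y * ∑ w, ∑ z, pauliString t w z * X z w) := by
    calc ∑ s : Fin n → Fin 4, (pauliSign s t : ℂ) * (pauliString s * X * pauliString s) x y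
        = ∑ s : Fin n → Fin 4, ∑ w, ∑ z,
            (pauliSign s t : ℂ) * (X z w * (pauliString s x z * pauliString s w y)) := by
          refine Finset.sum_congr rfl fun s _ => ?_
          rw [expand s, Finset.mul_sum]
          exact Finset.sum_congr rfl fun w _ => by rw [Finset.mul_sum]
      _ = ∑ w, ∑ z, ∑ s : Fin n → Fin 4,
            (pauliSign s t : ℂ) * (X z w * (pauliString s x z * pauliString s w y)) := by
          rw [Finset.sum_comm]
          exact Finset.sum_congr rfl fun w _ => Finset.sum_comm
      _ = ∑ w, ∑ z, X z w * (2 ^ n * (pauliString t x y * pauliString t w z)) := by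
          refine Finset.sum_congr rfl fun w _ => Finset.sum_congr rfl fun z _ => ?_
          rw [← key_sum t x z w y, Finset.mul_sum]
          exact Finset.sum_congr rfl fun s _ => by ring
      _ = 2 ^ n * (pauliString t x y * ∑ w, ∑ z, pauliString t w z * X z w) := by
          simp only [Finset.mul_sum]
          exact Finset.sum_congr rfl fun w _ => Finset.sum_congr rfl fun z _ => by ring
  rw [main]
  have htr : (pauliString t * X).trace = ∑ w, ∑ z, pauliString t w z * X z w := by
    simp [Matrix.trace, Matrix.diag, Matrix.mul_apply]
  rw [twirlCoeff, htr]
  rw [show ((4:ℂ)^n)⁻¹ = ((2:ℂ)^n)⁻¹ * ((2:ℂ)^n)⁻¹ by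
    rw [← mul_inv, ← mul_pow]; norm_num]
  have h2 := @two_pow_ne n
  field_simp




lemma channel_eig {n : ℕ} (μ : (Fin n → Fin 4) → ℝ) (t : Fin n → Fin 4) (c : ℂ) :
    pauliChannel μ (c • pauliString t) = ((pauliFourier μ t : ℂ) * c) • pauliString t := by
  unfold pauliChannel
  have h : ∀ s : Fin n → Fin 4,
      (μ s : ℂ) • (pauliString s * (c • pauliString t) * pauliString s)
        = ((μ s : ℂ) * (pauliSign s t : ℂ) * c) • pauliString t := by
    intro s
    rw [Matrix.mul_smul, Matrix.smul_mul, sss_string, smul_smul, smul_smul]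
    congr 1
    ring
  simp only [h, ← Finset.sum_smul]
  congr 1
  rw [pauliFourier]
  push_cast
  rw [Finset.sum_mul]
  exact Finset.sum_congr rfl fun s _ => by ring

lemma channel_iter {n : ℕ} (μ : (Fin n → Fin 4) → ℝ) (t : Fin n → Fin 4) (k : ℕ) (c : ℂ) :
    (pauliChannel μ)^[k] (c • pauliString t)
      = ((pauliFourier μ t : ℂ) ^ k * c) • pauliString t := by
  induction k generalizing c with
  | zero => simp
  | succ k ih =>
    rw [Function.iterate_succ_apply, channel_eig, ih, pow_succ]
    ring_nf

lemma trace_sq {n : ℕ} (t : Fin n → Fin 4) :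
    (pauliString t * pauliString t).trace = (2:ℂ) ^ n := by
  rw [pauliString_mul_self, Matrix.trace_one]
  simp

/-- SPAM-robust estimation identity:
`2^{-n} tr(T_t(Φ₂(P_t)) · 𝒫_μ^k(T_t(Φ₁(P_t))))
  = (2^{-n} tr(P_t Φ₂(P_t))) · (2^{-n} tr(P_t Φ₁(P_t))) · α_μ(t)^k`. -/
theorem spam_robust_estimation {n : ℕ} (hn : 0 < n) (μ : (Fin n → Fin 4) → ℝ)
    (hpos : ∀ s, 0 ≤ μ s) (hsum : ∑ s : Fin n → Fin 4, μ s = 1)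
    (Φ₁ Φ₂ : Matrix (Fin n → Fin 2) (Fin n → Fin 2) ℂ →ₗ[ℂ]
      Matrix (Fin n → Fin 2) (Fin n → Fin 2) ℂ)
    (t : Fin n → Fin 4) (k : ℕ) :
    ((2 : ℂ) ^ n)⁻¹ *
        (twirl t (Φ₂ (pauliString t)) *
          (pauliChannel μ)^[k] (twirl t (Φ₁ (pauliString t)))).trace =
      (((2 : ℂ) ^ n)⁻¹ * (pauliString t * Φ₂ (pauliString t)).trace) *
        (((2 : ℂ) ^ n)⁻¹ * (pauliString t * Φ₁ (pauliString t)).trace) *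
        (pauliFourier μ t : ℂ) ^ k := by
  have e1 : twirl t (Φ₁ (pauliString t)) = twirlCoeff t (Φ₁ (pauliString t)) • pauliString t :=
    twirl_eq t _
  have e2 : twirl t (Φ₂ (pauliString t)) = twirlCoeff t (Φ₂ (pauliString t)) • pauliString t :=
    twirl_eq t _
  rw [e1, e2, channel_iter, Matrix.smul_mul, Matrix.mul_smul, smul_smul,
    Matrix.trace_smul, smul_eq_mul, trace_sq]
  rw [show twirlCoeff t (Φ₁ (pauliString t))
      = ((2 : ℂ) ^ n)⁻¹ * (pauliString t * Φ₁ (pauliString t)).trace from rfl,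
    show twirlCoeff t (Φ₂ (pauliString t))
      = ((2 : ℂ) ^ n)⁻¹ * (pauliString t * Φ₂ (pauliString t)).trace from rfl]
  have h2 := @two_pow_ne n
  field_simp
end
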